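/- For A > 0, σ > 0, μ ∈ ℝ, θ > 0, the function F(θ) = ½·Erfc((A - θμ)/(σ√(2θ))) + ½·exp(2μA/σ²)·Erfc((A + θμ)/(σ√(2θ))) is differentiable in θ with ∂_θ F(θ) = (A/(σ√(2π θ³)))·exp(-η²), where η = (A - θμ)/(σ√(2θ)). In particular ∂_θ F(θ) > 0. -/

import Mathlib

/-- The complementary error function `Erfc z = (2/√π) ∫_z^∞ exp (-w²) dw`. -/
noncomputable def Erfc (z : ℝ) : ℝ :=
  (2 / Real.sqrt Real.pi) * ∫ w in Set.Ioi z, Real.exp (-(w ^ 2))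

/-!
Write `η t = (A - tμ)/(σ√(2t))` and `ζ t = (A + tμ)/(σ√(2t))`. Since `Erfc' = -(2/√π) exp(-z²)`,
the derivative of `F` is `-(1/√π) (exp(-η²) η' + exp(2μA/σ²) exp(-ζ²) ζ')`. The identity
`ζ² - η² = 2μA/σ²` makes both Gaussian weights equal to `exp(-η²)`, and
`η' + ζ' = (d/dt) 2A/(σ√(2t)) = -2A/(σ (2t)^{3/2})`, so `F' = A exp(-η²)/(σ√(2πt³)) > 0`.
-/

open Real MeasureTheory Set

theorem hasDerivAt_integral_Ioi {E : Type*} [NormedAddCommGroup E] [NormedSpace ℝ E]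
    [CompleteSpace E] {f : ℝ → E} (hf : Integrable f) {z : ℝ} (hz : ContinuousAt f z) :
    HasDerivAt (fun u => ∫ x in Ioi u, f x) (-f z) z := by
  have hIoi : (fun u => ∫ x in Ioi u, f x) = fun u => (∫ x in Ioi 0, f x) - ∫ x in 0..u, f x := by
    ext u
    rw [← intervalIntegral.integral_Ioi_sub_Ioi' hf.integrableOn hf.integrableOn, sub_sub_cancel]
  rw [hIoi]
  exact (intervalIntegral.integral_hasDerivAt_right hf.intervalIntegrable
    hf.aestronglyMeasurable.stronglyMeasurableAtFilter hz).const_sub _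

theorem hasDerivAt_Erfc (z : ℝ) :
    HasDerivAt Erfc (-(2 / √π * exp (-z ^ 2))) z := by
  have hgauss : Integrable fun w : ℝ => exp (-w ^ 2) := by
    simpa using integrable_exp_neg_mul_sq one_pos
  exact ((hasDerivAt_integral_Ioi hgauss (by fun_prop : Continuous _).continuousAt).const_mul
    (2 / √π)).congr_deriv (mul_neg _ _)

theorem HasDerivAt.div_const_mul_sqrt_two_mul {p : ℝ → ℝ} {p' θ c : ℝ} (hp : HasDerivAt p p' θ)
    (hc : c ≠ 0) (hθ : 0 < θ) :
    HasDerivAt (fun t => p t / (c * √(2 * t)))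
      ((p' * (2 * θ) - p θ) / (c * √(2 * θ) * (2 * θ))) θ := by
  have hsqrt : HasDerivAt (fun t => √(2 * t)) (2 / (2 * √(2 * θ))) θ := by
    simpa using ((hasDerivAt_id θ).const_mul 2).sqrt (by positivity)
  refine (hp.div (hsqrt.const_mul c) (by positivity)).congr_deriv ?_
  field_simp
  rw [sq_sqrt (by positivity)]
  ring

theorem hasDerivAt_half_Erfc_add {η ζ : ℝ → ℝ} {η' ζ' θ : ℝ} (C : ℝ)
    (hη : HasDerivAt η η' θ) (hζ : HasDerivAt ζ ζ' θ)
    (hC : C * exp (-ζ θ ^ 2) = exp (-η θ ^ 2)) :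
    HasDerivAt (fun t => 1 / 2 * Erfc (η t) + 1 / 2 * C * Erfc (ζ t))
      (-(exp (-η θ ^ 2) * (η' + ζ') / √π)) θ := by
  refine ((((hasDerivAt_Erfc (η θ)).comp θ hη).const_mul (1 / 2)).add
    (((hasDerivAt_Erfc (ζ θ)).comp θ hζ).const_mul (1 / 2 * C))).congr_deriv ?_
  rw [← hC]
  field_simp
  ring

theorem exp_mul_exp_neg_sq_add_eq_exp_neg_sq_sub {A σ μ θ : ℝ} (hσ : σ ≠ 0) (hθ : 0 < θ) :
    exp (2 * μ * A / σ ^ 2) * exp (-((A + θ * μ) / (σ * √(2 * θ))) ^ 2)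
      = exp (-((A - θ * μ) / (σ * √(2 * θ))) ^ 2) := by
  rw [← exp_add]
  congr 1
  field_simp
  rw [sq_sqrt (by positivity)]
  ring

/-- The derivative computation underlying Theorem 5.4 (case `A > 0`): the
running-maximum tail probability (A.7b) is differentiable in the horizon `θ`,
with positive derivative `(A/(σ √(2π θ³))) exp (-η²)`, `η = (A - θμ)/(σ√(2θ))`. -/
theorem runningMax_tail_deriv_pos
    (A σ μ : ℝ) (hA : 0 < A) (hσ : 0 < σ) (θ : ℝ) (hθ : 0 < θ)
    (F : ℝ → ℝ)
    (hF : ∀ t > (0:ℝ), F t =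
      1 / 2 * Erfc ((A - t * μ) / (σ * Real.sqrt (2 * t)))
        + 1 / 2 * Real.exp (2 * μ * A / σ ^ 2)
            * Erfc ((A + t * μ) / (σ * Real.sqrt (2 * t)))) :
    HasDerivAt F
      (A / (σ * Real.sqrt (2 * Real.pi * θ ^ 3))
        * Real.exp (-((A - θ * μ) / (σ * Real.sqrt (2 * θ))) ^ 2)) θ ∧
    0 < A / (σ * Real.sqrt (2 * Real.pi * θ ^ 3))
        * Real.exp (-((A - θ * μ) / (σ * Real.sqrt (2 * θ))) ^ 2) := by
  have hη := ((hasDerivAt_mul_const μ).const_sub A).div_const_mul_sqrt_two_mul hσ.ne' hθ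
  have hζ := ((hasDerivAt_mul_const μ).const_add A).div_const_mul_sqrt_two_mul hσ.ne' hθ
  have hG := hasDerivAt_half_Erfc_add _ hη hζ
    (exp_mul_exp_neg_sq_add_eq_exp_neg_sq_sub hσ.ne' hθ)
  have hsqrt : √(2 * π * θ ^ 3) = √π * √(2 * θ) * θ := by
    rw [show 2 * π * θ ^ 3 = π * (2 * θ) * θ ^ 2 by ring, sqrt_mul (by positivity),
      sqrt_mul pi_pos.le, sqrt_sq hθ.le]
  refine ⟨?_, by positivity⟩
  refine (hG.congr_of_eventuallyEq ?_).congr_deriv ?_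
  · filter_upwards [eventually_gt_nhds hθ] with t ht using hF t ht
  · rw [hsqrt]
    field_simp
    ring
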